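/- Let a, b ∈ R = k⟨X⟩ * k[Y] be commuting elements of equal total degree n, both top-pure, with b non-pure. Then there exists λ ∈ k such that ā = λ·b̄ in (Gr R)_n. -/

import Mathlib

/-- Words over `X ⊔ Y`. -/
abbrev FM (X Y : Type) := FreeMonoid (X ⊕ Y)

/-- Swapping two adjacent `Y`-letters. -/
def yRel (X Y : Type) : FM X Y → FM X Y → Prop := fun a b =>
  ∃ (u v : FM X Y) (y₁ y₂ : Y),
    a = u * FreeMonoid.of (Sum.inr y₁) * FreeMonoid.of (Sum.inr y₂) * v ∧
    b = u * FreeMonoid.of (Sum.inr y₂) * FreeMonoid.of (Sum.inr y₁) * v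

/-- The congruence generated by swaps of adjacent `Y`-letters. -/
def coCon (X Y : Type) : Con (FM X Y) := conGen (yRel X Y)

/-- The coproduct monoid `⟨X⟩ * [Y]`. -/
abbrev CoprodM (X Y : Type) := (coCon X Y).Quotient

/-- Length descends to the quotient. -/
def lenHom (X Y : Type) : CoprodM X Y →* Multiplicative ℕ :=
  Con.lift _ (FreeMonoid.lift fun _ => Multiplicative.ofAdd 1) (by
    refine Con.conGen_le.mpr ?_
    rintro a b ⟨u, v, y₁, y₂, rfl, rfl⟩
    simp [Con.ker_rel, map_mul])

/-- Length of an element of the coproduct monoid. -/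
def len {X Y : Type} (w : CoprodM X Y) : ℕ := Multiplicative.toAdd (lenHom X Y w)

/-- A monoid recording the commuting prefix and suffix. -/
inductive PS (Y : Type) where
  | pure : Multiset Y → PS Y
  | mixed : Multiset Y → Multiset Y → PS Y

def PS.mul {Y : Type} : PS Y → PS Y → PS Y
  | .pure c, .pure d => .pure (c + d)
  | .pure c, .mixed p s => .mixed (c + p) s
  | .mixed p s, .pure d => .mixed p (s + d)
  | .mixed p _, .mixed _ s' => .mixed p s'

instance {Y : Type} : Monoid (PS Y) where
  mul := PS.mul
  one := .pure 0
  mul_assoc a b c := by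
    rcases a <;> rcases b <;> rcases c <;>
      simp [(· * ·), PS.mul, add_assoc]
  one_mul a := by rcases a <;> simp [(· * ·), PS.mul]
  mul_one a := by rcases a <;> simp [(· * ·), PS.mul]

/-- The prefix/suffix data descends to the quotient. -/
def psHom (X Y : Type) : CoprodM X Y →* PS Y :=
  Con.lift _ (FreeMonoid.lift fun a =>
      match a with
      | Sum.inl _ => PS.mixed 0 0
      | Sum.inr y => PS.pure {y}) (by
    refine Con.conGen_le.mpr ?_
    rintro a b ⟨u, v, y₁, y₂, rfl, rfl⟩
    have key : (PS.pure {y₁} : PS Y) * PS.pure {y₂} = PS.pure {y₂} * PS.pure {y₁} := by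
      show PS.mul _ _ = PS.mul _ _
      simp [PS.mul, add_comm]
    simp only [Con.ker_rel, map_mul, FreeMonoid.lift_eval_of]
    rw [mul_assoc _ (PS.pure {y₁}), key, mul_assoc, ← mul_assoc, ← mul_assoc])

/-- The commuting prefix of an element, as a multiset of `Y`-variables. -/
def pre {X Y : Type} (w : CoprodM X Y) : Multiset Y :=
  match psHom X Y w with
  | .pure c => c
  | .mixed p _ => p

/-- The commuting suffix of an element, as a multiset of `Y`-variables. -/
def suf {X Y : Type} (w : CoprodM X Y) : Multiset Y :=
  match psHom X Y w with
  | .pure c => c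
  | .mixed _ s => s

/-- The canonical embedding of the free abelian monoid `[Y]` (words in `Y`). -/
def yEmb (X Y : Type) : FreeMonoid Y →* CoprodM X Y :=
  (Con.mk' (coCon X Y)).comp (FreeMonoid.map Sum.inr)

/-- An element is pure if it involves only `Y`-variables. -/
def IsPure {X Y : Type} (w : CoprodM X Y) : Prop := w ∈ MonoidHom.mrange (yEmb X Y)

/-- The pure element of the coproduct monoid corresponding to a multiset of
`Y`-variables. -/
noncomputable def pureElt {X Y : Type} (c : Multiset Y) : CoprodM X Y :=
  yEmb X Y (FreeMonoid.ofList c.toList)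

/-- The equivalence relation `∼`: equal lengths and either both pure, or equal
prefix lengths, equal middle parts and equal suffix lengths. -/
noncomputable def Sim {X Y : Type} (u v : CoprodM X Y) : Prop :=
  len u = len v ∧
  ((IsPure u ∧ IsPure v) ∨
    (¬ IsPure u ∧ ¬ IsPure v ∧
      Multiset.card (pre u) = Multiset.card (pre v) ∧
      Multiset.card (suf u) = Multiset.card (suf v) ∧
      ∃ m : CoprodM X Y,
        u = pureElt (pre u) * m * pureElt (suf u) ∧
        v = pureElt (pre v) * m * pureElt (suf v)))



/-!
Let `m < n` be the largest length of an impure word occurring in `a` or `b`, and let `w₀` be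
such a word, written `w₀ = P · c₀ · S` with `P`, `S` pure and `c₀` its core. Encode a word
`P' · c₀ · S'` of length `m` by the monomial `x^P' y^S'` in two commuting copies of the
variables, giving polynomials `α`, `β` for `a`, `b`; write `A`, `B` for the top-degree parts.
Since impure words have length at most `m < n`, a word of `ab` of length `n + m` with core `c₀`
is (pure of length `n`) · (impure of length `m`) if its prefix has length `≥ n`, and the
reverse if its suffix does. Comparing these words in `ab = ba` gives
`A(x) β = B(x) α` and `α B(y) = β A(y)`; as `α` or `β` is nonzero, `A(x) B(y) = B(x) A(y)` in
a domain, and comparing coefficients yields `A = λ B`.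
-/

noncomputable section

theorem mul_eq_mul_of_cross {R : Type*} [CommRing R] [IsDomain R] {a b a' b' α β : R}
    (h₁ : a * β = b * α) (h₂ : α * b' = β * a') (h : α ≠ 0 ∨ β ≠ 0) : a * b' = b * a' := by
  rcases h with hα | hβ
  · exact mul_left_cancel₀ hα (by linear_combination a * h₂ + a' * h₁)
  · exact mul_left_cancel₀ hβ (by linear_combination b' * h₁ + b * h₂)

theorem MvPolynomial.exists_eq_smul_of_map_C_mul_C_eq {σ k : Type*} [Field k]
    {p q : MvPolynomial σ k} (h : map C p * C q = map C q * C p) (hq : q ≠ 0) :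
    ∃ r : k, p = r • q := by
  have hcoeff (ν μ) : p.coeff ν * q.coeff μ = q.coeff ν * p.coeff μ := by
    simpa [mul_comm _ (C _), coeff_C_mul, coeff_map] using
      congrArg (coeff μ) (congrArg (coeff ν) h)
  obtain ⟨μ, hμ⟩ := ne_zero_iff.mp hq
  refine ⟨p.coeff μ / q.coeff μ, MvPolynomial.ext _ _ fun ν => ?_⟩
  rw [coeff_smul, smul_eq_mul, div_mul_eq_mul_div, eq_div_iff hμ, hcoeff, mul_comm]

theorem MonoidAlgebra.linearCombination_coeff_mul {k M A : Type*} [CommSemiring k] [Monoid M]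
    [Semiring A] [Algebra k A] (φ π ψ : M → A) (f g : MonoidAlgebra k M)
    (h : ∀ u ∈ f.coeff.support, ∀ v ∈ g.coeff.support, φ (u * v) = π u * ψ v) :
    Finsupp.linearCombination k φ (f * g).coeff =
      Finsupp.linearCombination k π f.coeff * Finsupp.linearCombination k ψ g.coeff := by
  simp only [mul_def, coeff_finsuppSum, coeff_single, map_finsuppSum,
    Finsupp.linearCombination_single]
  rw [Finsupp.linearCombination_apply, Finsupp.linearCombination_apply, Finsupp.sum_mul]
  refine Finsupp.sum_congr fun u hu => ?_
  rw [Finsupp.mul_sum]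
  exact Finsupp.sum_congr fun v hv => by rw [h u hu v hv, smul_mul_smul_comm]

theorem Finsupp.apply_linearCombination_eq {α M R : Type*} [CommSemiring R] [AddCommMonoid M]
    [Module R M] (ℓ : M →ₗ[R] R) {v : α → M} (f : α →₀ R) {a : α} (h₁ : ℓ (v a) = 1)
    (h₀ : ∀ b ≠ a, ℓ (v b) = 0) : ℓ (linearCombination R v f) = f a := by
  classical
  have h (b) : ℓ (v b) = if b = a then 1 else 0 := by
    split_ifs with hb
    exacts [hb ▸ h₁, h₀ b hb]
  simp only [linearCombination_apply, map_finsuppSum, map_smul, h, smul_eq_mul, mul_ite, mul_one,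
    mul_zero]
  exact sum_ite_self_eq' f a

namespace CoprodM

variable {X Y : Type}

def of (g : X ⊕ Y) : CoprodM X Y := Con.mk' _ (FreeMonoid.of g)

lemma of_inr_mul_of_inr_comm (y₁ y₂ : Y) :
    of (X := X) (.inr y₁) * of (.inr y₂) = of (.inr y₂) * of (.inr y₁) :=
  (Con.eq _).mpr (ConGen.Rel.of _ _ ⟨1, 1, y₁, y₂, by simp, by simp⟩)

lemma yEmb_ofList (l : List Y) :
    yEmb X Y (FreeMonoid.ofList l) = (l.map fun y => of (.inr y)).prod := by
  induction l with
  | nil => exact map_one _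
  | cons y l ih => rw [FreeMonoid.ofList_cons, map_mul, ih, List.map_cons, List.prod_cons]; rfl

lemma pureElt_coe (l : List Y) :
    pureElt (X := X) (l : Multiset Y) = (l.map fun y => of (.inr y)).prod := by
  rw [pureElt, yEmb_ofList]
  refine ((Multiset.coe_eq_coe.mp (Multiset.coe_toList _)).map _).prod_eq' ?_
  refine List.pairwise_of_forall_mem_list fun _ ha _ hb => ?_
  obtain ⟨y₁, -, rfl⟩ := List.mem_map.mp ha
  obtain ⟨y₂, -, rfl⟩ := List.mem_map.mp hb
  exact of_inr_mul_of_inr_comm y₁ y₂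

lemma pureElt_add (c d : Multiset Y) : pureElt (X := X) (c + d) = pureElt c * pureElt d := by
  obtain ⟨l, rfl⟩ := Quot.exists_rep c
  obtain ⟨l', rfl⟩ := Quot.exists_rep d
  simp only [Multiset.quot_mk_to_coe'', Multiset.coe_add, pureElt_coe, List.map_append,
    List.prod_append]

lemma pureElt_zero : pureElt (X := X) (0 : Multiset Y) = 1 := pureElt_coe []

lemma pureElt_singleton (y : Y) : pureElt (X := X) {y} = of (.inr y) := by
  simpa using pureElt_coe (X := X) [y]

lemma len_mul (u v : CoprodM X Y) : len (u * v) = len u + len v := by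
  simp [len]

lemma len_of (g : X ⊕ Y) : len (of g) = 1 := rfl

lemma len_pureElt (c : Multiset Y) : len (pureElt (X := X) c) = Multiset.card c := by
  induction c using Multiset.induction_on with
  | empty => rw [pureElt_zero]; rfl
  | cons y c ih =>
    rw [← Multiset.singleton_add, pureElt_add, len_mul, pureElt_singleton, len_of, ih,
      Multiset.card_add, Multiset.card_singleton, add_comm]

end CoprodM

open CoprodM

/-- `mixed p c s` stands for `pureElt p * c * pureElt s`, the middle factor being kept as an
element of `CoprodM X Y` itself: this is not a normal form, but `decomp` below is injective. -/
inductive Decomp (X Y : Type)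
  | pure : Multiset Y → Decomp X Y
  | mixed : Multiset Y → CoprodM X Y → Multiset Y → Decomp X Y

namespace Decomp

variable {X Y : Type}

def mul : Decomp X Y → Decomp X Y → Decomp X Y
  | pure c, pure d => pure (c + d)
  | pure c, mixed p w s => mixed (c + p) w s
  | mixed p w s, pure d => mixed p w (s + d)
  | mixed p w s, mixed p' w' s' => mixed p (w * pureElt (s + p') * w') s'

instance : Mul (Decomp X Y) := ⟨mul⟩

lemma pure_mul_pure (c d : Multiset Y) : pure (X := X) c * pure d = pure (c + d) := rfl

lemma pure_mul_mixed (c p s : Multiset Y) (w : CoprodM X Y) :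
    pure c * mixed p w s = mixed (c + p) w s := rfl

lemma mixed_mul_pure (p s d : Multiset Y) (w : CoprodM X Y) :
    mixed p w s * pure d = mixed p w (s + d) := rfl

lemma mixed_mul_mixed (p s p' s' : Multiset Y) (w w' : CoprodM X Y) :
    mixed p w s * mixed p' w' s' = mixed p (w * pureElt (s + p') * w') s' := rfl

instance : Monoid (Decomp X Y) where
  one := pure 0
  mul_assoc a b c := by
    rcases a <;> rcases b <;> rcases c <;>
      simp only [pure_mul_pure, pure_mul_mixed, mixed_mul_pure, mixed_mul_mixed, add_assoc,
        mul_assoc]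
  one_mul a := by
    change pure 0 * a = a
    rcases a <;> simp only [pure_mul_pure, pure_mul_mixed, zero_add]
  mul_one a := by
    change a * pure 0 = a
    rcases a <;> simp only [pure_mul_pure, mixed_mul_pure, add_zero]

def eval : Decomp X Y →* CoprodM X Y where
  toFun
    | pure c => pureElt c
    | mixed p w s => pureElt p * w * pureElt s
  map_one' := pureElt_zero
  map_mul' a b := by
    rcases a with c | ⟨p, w, s⟩ <;> rcases b with d | ⟨p', w', s'⟩ <;>
      simp only [pure_mul_pure, pure_mul_mixed, mixed_mul_pure, mixed_mul_mixed, pureElt_add,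
        mul_assoc]

end Decomp

namespace CoprodM

variable {X Y : Type}

def decomp : CoprodM X Y →* Decomp X Y :=
  Con.lift _ (FreeMonoid.lift (Sum.elim (fun x => .mixed 0 (of (.inl x)) 0) fun y => .pure {y}))
    (Con.conGen_le.mpr <| by
      rintro _ _ ⟨u, v, y₁, y₂, rfl, rfl⟩
      simp only [Con.ker_rel, map_mul, FreeMonoid.lift_eval_of, Sum.elim_inr,
        mul_assoc _ (Decomp.pure _), Decomp.pure_mul_pure, add_comm {y₁}])

lemma eval_decomp (w : CoprodM X Y) : Decomp.eval (decomp w) = w := by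
  suffices Decomp.eval.comp decomp = MonoidHom.id (CoprodM X Y) from DFunLike.congr_fun this w
  ext (x | y)
  · change pureElt 0 * of (.inl x) * pureElt 0 = of (.inl x)
    rw [pureElt_zero, one_mul, mul_one]
  · exact pureElt_singleton y

lemma decomp_injective : Function.Injective (decomp (X := X) (Y := Y)) :=
  Function.LeftInverse.injective eval_decomp

lemma isPure_iff (w : CoprodM X Y) : IsPure w ↔ ∃ c, decomp w = .pure c := by
  constructor
  · rintro ⟨u, rfl⟩
    induction u using FreeMonoid.inductionOn' with
    | one => exact ⟨0, map_one _⟩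
    | of_mul y u ih =>
      obtain ⟨c, hc⟩ := ih
      exact ⟨{y} + c, by rw [map_mul, map_mul, hc]; rfl⟩
  · rintro ⟨c, hc⟩
    rw [← eval_decomp w, hc]
    exact ⟨_, rfl⟩

lemma not_isPure_iff (w : CoprodM X Y) : ¬ IsPure w ↔ ∃ p c s, decomp w = .mixed p c s := by
  rw [isPure_iff]
  rcases decomp w with c | ⟨p, c, s⟩ <;> simp

lemma len_of_decomp_eq_pure {w : CoprodM X Y} {c : Multiset Y} (h : decomp w = .pure c) :
    len w = Multiset.card c := by
  rw [← eval_decomp w, h]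
  exact len_pureElt c

lemma len_of_decomp_eq_mixed {w c : CoprodM X Y} {p s : Multiset Y}
    (h : decomp w = .mixed p c s) : len w = Multiset.card p + len c + Multiset.card s := by
  rw [← eval_decomp w, h]
  change len (pureElt p * c * pureElt s) = _
  rw [len_mul, len_mul, len_pureElt, len_pureElt]

lemma card_add_len_add_card_le {m : ℕ} {w c : CoprodM X Y} {p s : Multiset Y}
    (h : decomp w = .mixed p c s) (hw : ¬ IsPure w → len w ≤ m) :
    Multiset.card p + len c + Multiset.card s ≤ m :=
  len_of_decomp_eq_mixed h ▸ hw ((not_isPure_iff w).mpr ⟨p, c, s, h⟩)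

open MvPolynomial Finsupp

section Terms

variable (k : Type) [CommSemiring k] [DecidableEq Y]

def topTerm (n : ℕ) (w : CoprodM X Y) : MvPolynomial Y k :=
  match decomp w with
  | .pure c => if Multiset.card c = n then monomial (Multiset.toFinsupp c) 1 else 0
  | .mixed .. => 0

open scoped Classical in
/-- The outer variables record the prefix, the inner ones the suffix. -/
def coreTerm (c₀ : CoprodM X Y) (d i j : ℕ) (w : CoprodM X Y) :
    MvPolynomial Y (MvPolynomial Y k) :=
  match decomp w with
  | .pure _ => 0
  | .mixed p c s =>
    if c = c₀ ∧ len w = d ∧ i ≤ Multiset.card p ∧ j ≤ Multiset.card s then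
      monomial (Multiset.toFinsupp p) (monomial (Multiset.toFinsupp s) 1)
    else 0

variable {k}

lemma coreTerm_mul_left {n m : ℕ} (hmn : m < n) (c₀ : CoprodM X Y) {u v : CoprodM X Y}
    (hu : len u ≤ n) (hu' : ¬ IsPure u → len u ≤ m) (hv' : ¬ IsPure v → len v ≤ m) :
    coreTerm k c₀ (n + m) n 0 (u * v) = map C (topTerm k n u) * coreTerm k c₀ m 0 0 v := by
  classical
  rw [coreTerm, coreTerm, topTerm, map_mul, len_mul]
  rcases hdu : decomp u with c | ⟨p, w, s⟩ <;> rcases hdv : decomp v with d | ⟨p', w', s'⟩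
  · simp [Decomp.pure_mul_pure]
  · have := len_of_decomp_eq_pure hdu
    have := len_of_decomp_eq_mixed hdv
    have := card_add_len_add_card_le hdv hv'
    simp only [Decomp.pure_mul_mixed, apply_ite (map C), map_zero, ite_zero_mul_ite_zero,
      map_monomial, map_one, monomial_mul, one_mul, Multiset.toFinsupp_add, Multiset.card_add,
      zero_le, and_true]
    exact if_congr ⟨fun ⟨hw, hl, _⟩ => ⟨by omega, hw, by omega⟩,
      fun ⟨_, hw, _⟩ => ⟨hw, by omega, by omega⟩⟩ rfl rfl
  · have := card_add_len_add_card_le hdu hu'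
    simp only [Decomp.mixed_mul_pure, map_zero, zero_mul]
    exact if_neg (by omega)
  · have := len_of_decomp_eq_mixed hdu
    have := len_of_decomp_eq_mixed hdv
    have := card_add_len_add_card_le hdu hu'
    have := card_add_len_add_card_le hdv hv'
    simp only [Decomp.mixed_mul_mixed, map_zero, zero_mul]
    exact if_neg (by omega)

lemma coreTerm_mul_right {n m : ℕ} (hmn : m < n) (c₀ : CoprodM X Y) {u v : CoprodM X Y}
    (hu' : ¬ IsPure u → len u ≤ m) (hv : len v ≤ n) (hv' : ¬ IsPure v → len v ≤ m) :
    coreTerm k c₀ (n + m) 0 n (u * v) = coreTerm k c₀ m 0 0 u * C (topTerm k n v) := by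
  classical
  rw [coreTerm, coreTerm, topTerm, map_mul, len_mul]
  rcases hdu : decomp u with c | ⟨p, w, s⟩ <;> rcases hdv : decomp v with d | ⟨p', w', s'⟩
  · simp [Decomp.pure_mul_pure]
  · have := card_add_len_add_card_le hdv hv'
    simp only [Decomp.pure_mul_mixed, zero_mul]
    exact if_neg (by omega)
  · have := len_of_decomp_eq_pure hdv
    have := len_of_decomp_eq_mixed hdu
    have := card_add_len_add_card_le hdu hu'
    simp only [Decomp.mixed_mul_pure, apply_ite C, C_0, ite_zero_mul_ite_zero, mul_comm _ (C _),
      C_mul_monomial, monomial_mul, one_mul, Multiset.toFinsupp_add, Multiset.card_add, zero_le,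
      true_and, and_true]
    exact if_congr ⟨fun ⟨hw, hl, _⟩ => ⟨⟨hw, by omega⟩, by omega⟩,
      fun ⟨⟨hw, _⟩, _⟩ => ⟨hw, by omega, by omega⟩⟩ (by rw [add_comm]) rfl
  · have := len_of_decomp_eq_mixed hdu
    have := len_of_decomp_eq_mixed hdv
    have := card_add_len_add_card_le hdu hu'
    have := card_add_len_add_card_le hdv hv'
    simp only [Decomp.mixed_mul_mixed, C_0, mul_zero]
    exact if_neg (by omega)

lemma linearCombination_coreTerm_mul_left {n m : ℕ} (hmn : m < n) (c₀ : CoprodM X Y)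
    {f g : MonoidAlgebra k (CoprodM X Y)}
    (hf : ∀ u ∈ f.coeff.support, len u ≤ n ∧ (¬ IsPure u → len u ≤ m))
    (hg : ∀ v ∈ g.coeff.support, ¬ IsPure v → len v ≤ m) :
    linearCombination k (coreTerm k c₀ (n + m) n 0) (f * g).coeff =
      map C (linearCombination k (topTerm k n) f.coeff) *
        linearCombination k (coreTerm k c₀ m 0 0) g.coeff := by
  rw [MonoidAlgebra.linearCombination_coeff_mul _ (fun u => map C (topTerm k n u)) _ f g
    fun u hu v hv => coreTerm_mul_left hmn c₀ (hf u hu).1 (hf u hu).2 (hg v hv)]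
  congr 1
  exact (apply_linearCombination k
    (mapAlgHom (Algebra.ofId k (MvPolynomial Y k))).toLinearMap _ _).symm

lemma linearCombination_coreTerm_mul_right {n m : ℕ} (hmn : m < n) (c₀ : CoprodM X Y)
    {f g : MonoidAlgebra k (CoprodM X Y)}
    (hf : ∀ u ∈ f.coeff.support, ¬ IsPure u → len u ≤ m)
    (hg : ∀ v ∈ g.coeff.support, len v ≤ n ∧ (¬ IsPure v → len v ≤ m)) :
    linearCombination k (coreTerm k c₀ (n + m) 0 n) (f * g).coeff =
      linearCombination k (coreTerm k c₀ m 0 0) f.coeff *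
        C (linearCombination k (topTerm k n) g.coeff) := by
  rw [MonoidAlgebra.linearCombination_coeff_mul _ _ (fun v => C (topTerm k n v)) f g
    fun u hu v hv => coreTerm_mul_right hmn c₀ (hf u hu) (hg v hv).1 (hg v hv).2]
  congr 1
  exact (apply_linearCombination k
    (IsScalarTower.toAlgHom k (MvPolynomial Y k) (MvPolynomial Y (MvPolynomial Y k))).toLinearMap
    _ _).symm

lemma coeff_linearCombination_topTerm {n : ℕ} (f : MonoidAlgebra k (CoprodM X Y))
    {w : CoprodM X Y} {c : Multiset Y} (hw : decomp w = .pure c) (hn : len w = n) :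
    coeff (Multiset.toFinsupp c) (linearCombination k (topTerm k n) f.coeff) = f.coeff w := by
  rw [len_of_decomp_eq_pure hw] at hn
  refine apply_linearCombination_eq (lcoeff k _) _ (by simp [topTerm, hw, hn]) fun u hu => ?_
  have hu : decomp u ≠ .pure c := hw ▸ decomp_injective.ne hu
  rw [lcoeff_apply, topTerm]
  rcases hdu : decomp u with c' | _
  · have hc : Multiset.toFinsupp c' ≠ Multiset.toFinsupp c := by
      rw [Ne, Multiset.toFinsupp.injective.eq_iff]
      rintro rfl
      exact hu hdu
    simp [apply_ite (coeff _), coeff_monomial, hc]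
  · exact coeff_zero _

lemma coeff_coeff_linearCombination_coreTerm {d : ℕ} (f : MonoidAlgebra k (CoprodM X Y))
    {w c₀ : CoprodM X Y} {p s : Multiset Y} (hw : decomp w = .mixed p c₀ s) (hd : len w = d) :
    coeff (Multiset.toFinsupp s) (coeff (Multiset.toFinsupp p)
      (linearCombination k (coreTerm k c₀ d 0 0) f.coeff)) = f.coeff w := by
  refine apply_linearCombination_eq
    ((lcoeff k _).comp ((lcoeff (MvPolynomial Y k) (Multiset.toFinsupp p)).restrictScalars k))
    _ (by simp [coreTerm, hw, hd]) fun u hu => ?_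
  have hu : decomp u ≠ .mixed p c₀ s := hw ▸ decomp_injective.ne hu
  simp only [LinearMap.comp_apply, LinearMap.restrictScalars_apply, lcoeff_apply, coreTerm]
  rcases hdu : decomp u with c' | ⟨p', c', s'⟩
  · simp
  · dsimp only
    split_ifs with hc
    · rw [coeff_monomial]
      split_ifs with hp
      · rw [coeff_monomial, if_neg]
        intro hs
        rw [Multiset.toFinsupp.injective.eq_iff] at hp hs
        exact hu (by rw [hdu, hp, hs, hc.1])
      · exact coeff_zero _
    · simp

lemma coeff_eq_mul_of_linearCombination_topTerm_eq_smul {n : ℕ}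
    {a b : MonoidAlgebra k (CoprodM X Y)} {r : k}
    (hr : linearCombination k (topTerm k n) a.coeff =
      r • linearCombination k (topTerm k n) b.coeff)
    (ha : ∀ w ∈ a.coeff.support, len w = n → IsPure w)
    (hb : ∀ w ∈ b.coeff.support, len w = n → IsPure w) (w : CoprodM X Y) (hw : len w = n) :
    a.coeff w = r * b.coeff w := by
  by_cases hp : IsPure w
  · obtain ⟨c, hc⟩ := (isPure_iff w).mp hp
    rw [← coeff_linearCombination_topTerm a hc hw, ← coeff_linearCombination_topTerm b hc hw, hr,
      coeff_smul, smul_eq_mul]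
  · rw [notMem_support_iff.mp fun h => hp (ha w h hw),
      notMem_support_iff.mp fun h => hp (hb w h hw), mul_zero]

end Terms

theorem exists_linearCombination_topTerm_eq_smul {k : Type} [Field k] [DecidableEq Y] {n m : ℕ}
    (hmn : m < n) (c₀ : CoprodM X Y) {a b : MonoidAlgebra k (CoprodM X Y)} (hcomm : a * b = b * a)
    (ha : ∀ u ∈ a.coeff.support, len u ≤ n ∧ (¬ IsPure u → len u ≤ m))
    (hb : ∀ u ∈ b.coeff.support, len u ≤ n ∧ (¬ IsPure u → len u ≤ m))
    (hcore : linearCombination k (coreTerm k c₀ m 0 0) a.coeff ≠ 0 ∨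
      linearCombination k (coreTerm k c₀ m 0 0) b.coeff ≠ 0)
    (hB : linearCombination k (topTerm k n) b.coeff ≠ 0) :
    ∃ r : k, linearCombination k (topTerm k n) a.coeff =
      r • linearCombination k (topTerm k n) b.coeff := by
  refine exists_eq_smul_of_map_C_mul_C_eq (mul_eq_mul_of_cross ?_ ?_ hcore) hB
  · rw [← linearCombination_coreTerm_mul_left hmn c₀ ha fun v hv => (hb v hv).2, hcomm,
      linearCombination_coreTerm_mul_left hmn c₀ hb fun v hv => (ha v hv).2]
  · rw [← linearCombination_coreTerm_mul_right hmn c₀ (fun v hv => (ha v hv).2) hb, hcomm,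
      linearCombination_coreTerm_mul_right hmn c₀ (fun v hv => (hb v hv).2) ha]

end CoprodM

end

open CoprodM MvPolynomial Finsupp

/-- Lemma 4.5: commuting top-pure elements of equal total degree `n`, with `b`
non-pure, have proportional leading terms. -/
theorem coprod_leading_terms_proportional_top_pure {X Y k : Type} [Field k]
    (a b : MonoidAlgebra k (CoprodM X Y)) (n : ℕ)
    (hcomm : a * b = b * a)
    (hda : (∃ w ∈ a.coeff.support, len w = n) ∧ ∀ w ∈ a.coeff.support, len w ≤ n)
    (hdb : (∃ w ∈ b.coeff.support, len w = n) ∧ ∀ w ∈ b.coeff.support, len w ≤ n)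
    (hatp : ∀ w ∈ a.coeff.support, len w = n → IsPure w)
    (hbtp : ∀ w ∈ b.coeff.support, len w = n → IsPure w)
    (hbnp : ∃ w ∈ b.coeff.support, ¬ IsPure w) :
    ∃ lam : k, ∀ w : CoprodM X Y, len w = n → a.coeff w = lam * b.coeff w := by
  classical
  obtain ⟨-, ha⟩ := hda
  obtain ⟨⟨wb, hwb, hwbn⟩, hb⟩ := hdb
  obtain ⟨w₀, hw₀, hmax⟩ :=
    ((a.coeff.support ∪ b.coeff.support).filter (¬ IsPure ·)).exists_max_image len
      (by obtain ⟨w, hw, hwp⟩ := hbnp; exact ⟨w, by simp [hw, hwp]⟩)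
  simp only [Finset.mem_filter, Finset.mem_union] at hw₀ hmax
  have hmn : len w₀ < n := by
    rcases hw₀.1 with h | h
    · exact (ha _ h).lt_of_ne fun h' => hw₀.2 (hatp _ h h')
    · exact (hb _ h).lt_of_ne fun h' => hw₀.2 (hbtp _ h h')
  obtain ⟨p₀, c₀, s₀, hdw₀⟩ := (not_isPure_iff w₀).mp hw₀.2
  have hcore : linearCombination k (coreTerm k c₀ (len w₀) 0 0) a.coeff ≠ 0 ∨
      linearCombination k (coreTerm k c₀ (len w₀) 0 0) b.coeff ≠ 0 := by
    refine hw₀.1.imp (fun h => ?_) (fun h => ?_) <;>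
      exact ne_zero_iff.mpr ⟨_, ne_zero_iff.mpr ⟨_,
        (coeff_coeff_linearCombination_coreTerm _ hdw₀ rfl).trans_ne (mem_support_iff.mp h)⟩⟩
  obtain ⟨cb, hcb⟩ := (isPure_iff wb).mp (hbtp wb hwb hwbn)
  have hB : linearCombination k (topTerm k n) b.coeff ≠ 0 := ne_zero_iff.mpr
    ⟨_, (coeff_linearCombination_topTerm b hcb hwbn).trans_ne (mem_support_iff.mp hwb)⟩
  obtain ⟨r, hr⟩ := exists_linearCombination_topTerm_eq_smul hmn c₀ hcomm
    (fun u hu => ⟨ha u hu, fun h => hmax u ⟨.inl hu, h⟩⟩)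
    (fun u hu => ⟨hb u hu, fun h => hmax u ⟨.inr hu, h⟩⟩) hcore hB
  exact ⟨r, coeff_eq_mul_of_linearCombination_topTerm_eq_smul hr hatp hbtp⟩
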